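/- Let a : ℤ → ℝ be not identically zero and satisfy |a_k| ≤ c λ^{|k|} for all k ∈ ℤ, for some c > 0 and 0 < λ < 1. Then both A := Σ_{k∈ℤ} (a_k − 3a_{k−1} + 3a_{k−2} − a_{k−3})² > 0 and C := 3 Σ_{k∈ℤ} (a_k − 2a_{k−1} + a_{k−2})² > 0. -/

import Mathlib

open Filter Topology

private lemma int_const_of_step (f : ℤ → ℝ) (h : ∀ k : ℤ, f k = f (k - 1)) :
    ∀ k : ℤ, f k = f 0 := by
  intro k
  induction k using Int.induction_on with
  | zero => rfl
  | succ n ih => rw [h (n + 1)]; simpa using ih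
  | pred n ih =>
    have hstep := h (-(n:ℤ))
    rw [← hstep, ih]

private lemma abs_le_zero_of_pow (x c lam : ℝ) (hc : 0 < c) (hlam0 : 0 < lam)
    (hlam1 : lam < 1) (h : ∀ n : ℕ, |x| ≤ c * lam ^ n) : x = 0 := by
  have hlim : Tendsto (fun n : ℕ => c * lam ^ n) atTop (𝓝 0) := by
    simpa using (tendsto_pow_atTop_nhds_zero_of_lt_one hlam0.le hlam1).const_mul c
  have hle : |x| ≤ 0 := le_of_tendsto_of_tendsto' tendsto_const_nhds hlim h
  exact abs_eq_zero.mp (le_antisymm hle (abs_nonneg x))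

/-- If all second differences vanish and `a` decays, then `a ≡ 0`. -/
private lemma second_diff_zero (a : ℤ → ℝ) (c lam : ℝ)
    (hc : 0 < c) (hlam0 : 0 < lam) (hlam1 : lam < 1)
    (hdecay : ∀ k : ℤ, |a k| ≤ c * lam ^ k.natAbs)
    (h2 : ∀ k : ℤ, a k - 2 * a (k - 1) + a (k - 2) = 0) :
    ∀ k : ℤ, a k = 0 := by
  -- first differences are constant
  set g : ℤ → ℝ := fun k => a k - a (k - 1) with hg
  have hstep : ∀ k : ℤ, g k = g (k - 1) := by
    intro k
    have := h2 k
    simp only [hg]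
    have : a k - 2 * a (k - 1) + a (k - 2) = 0 := h2 k
    have h21 : (k : ℤ) - 1 - 1 = k - 2 := by ring
    rw [h21]; linarith
  have hconst : ∀ k : ℤ, g k = g 0 := int_const_of_step g hstep
  set d : ℝ := g 0 with hd
  -- a n = a 0 + n * d for natural n
  have hlin : ∀ n : ℕ, a (n : ℤ) = a 0 + n * d := by
    intro n
    induction n with
    | zero => simp
    | succ m ih =>
      have := hconst ((m : ℤ) + 1)
      have h1 : a ((m : ℤ) + 1) - a ((m : ℤ) + 1 - 1) = d := this
      push_cast
      have h2' : ((m : ℤ) + 1 - 1) = (m : ℤ) := by ring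
      rw [h2'] at h1
      have : a ((m : ℤ) + 1) = a (m : ℤ) + d := by linarith
      rw [this, ih]; push_cast; ring
  -- boundedness kills d
  have hbound : ∀ k : ℤ, |a k| ≤ c := by
    intro k
    refine (hdecay k).trans ?_
    have : lam ^ k.natAbs ≤ 1 := pow_le_one₀ hlam0.le hlam1.le
    nlinarith
  have hdzero : d = 0 := by
    by_contra hdne
    obtain ⟨n, hn⟩ := exists_nat_gt ((c + |a 0|) / |d|)
    have hdpos : 0 < |d| := abs_pos.mpr hdne
    have hngt : c + |a 0| < n * |d| := by
      rw [div_lt_iff₀ hdpos] at hn; linarith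
    have h1 : |a (n : ℤ)| ≤ c := hbound _
    have h2' : a (n : ℤ) = a 0 + n * d := hlin n
    have : (n : ℝ) * |d| = |(n : ℝ) * d| := by
      rw [abs_mul, abs_of_nonneg (by positivity : (0:ℝ) ≤ (n:ℝ))]
    rw [this] at hngt
    have := abs_add_le (a 0) ((n : ℝ) * d)
    have habs : |(n:ℝ) * d| - |a 0| ≤ |a 0 + n * d| := by
      have := abs_sub_abs_le_abs_sub ((n:ℝ) * d) (-(a 0))
      have h3 : (n:ℝ) * d - -(a 0) = a 0 + n * d := by ring
      rw [h3, abs_neg] at this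
      linarith
    rw [← h2'] at habs
    linarith
  -- so a is constant
  have hconsta : ∀ k : ℤ, a k = a 0 := by
    apply int_const_of_step
    intro k
    have := hconst k
    rw [hdzero] at this
    simpa [hg, sub_eq_zero] using this
  -- and the constant is 0
  have ha0 : a 0 = 0 := by
    apply abs_le_zero_of_pow (a 0) c lam hc hlam0 hlam1
    intro n
    have := hdecay (n : ℤ)
    rw [hconsta (n : ℤ)] at this
    simpa using this
  intro k; rw [hconsta k, ha0]

private lemma summable_geom_int (r : ℝ) (h0 : 0 ≤ r) (h1 : r < 1) :
    Summable (fun k : ℤ => r ^ k.natAbs) := by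
  apply Summable.of_nat_of_neg
  · simpa using summable_geometric_of_lt_one h0 h1
  · simpa using summable_geometric_of_lt_one h0 h1

/-- If `a : ℤ → ℝ` is not identically zero and `|a_k| ≤ c λ^{|k|}` with
`c > 0`, `0 < λ < 1`, then both
`A := Σ_k (a_k − 3a_{k−1} + 3a_{k−2} − a_{k−3})² > 0` and
`C := 3 Σ_k (a_k − 2a_{k−1} + a_{k−2})² > 0`. -/
theorem cubic_spline_A_C_pos (a : ℤ → ℝ) (c lam : ℝ)
    (hc : 0 < c) (hlam0 : 0 < lam) (hlam1 : lam < 1)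
    (hdecay : ∀ k : ℤ, |a k| ≤ c * lam ^ k.natAbs)
    (hne : ∃ k : ℤ, a k ≠ 0) :
    0 < ∑' k : ℤ, (a k - 3 * a (k - 1) + 3 * a (k - 2) - a (k - 3)) ^ 2 ∧
    0 < 3 * ∑' k : ℤ, (a k - 2 * a (k - 1) + a (k - 2)) ^ 2 := by
  have hlam3 : (0:ℝ) < lam ^ 3 := by positivity
  set K : ℝ := c / lam ^ 3 with hK
  have hKpos : 0 < K := by positivity
  -- shifted decay bound
  have hshift : ∀ k j : ℤ, j.natAbs ≤ 3 → |a (k - j)| ≤ K * lam ^ k.natAbs := by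
    intro k j hj
    refine (hdecay (k - j)).trans ?_
    rw [hK, div_mul_eq_mul_div, le_div_iff₀ hlam3, mul_comm c _, mul_assoc, mul_comm c _,
      ← mul_assoc, ← pow_add]
    have hexp : k.natAbs ≤ (k - j).natAbs + 3 := by
      have := Int.natAbs_sub_le k j
      omega
    have := pow_le_pow_of_le_one hlam0.le hlam1.le hexp
    nlinarith
  have hba : ∀ k : ℤ, |a k| ≤ K * lam ^ k.natAbs := by
    intro k; simpa using hshift k 0 (by simp)
  have hb1 : ∀ k : ℤ, |a (k - 1)| ≤ K * lam ^ k.natAbs := fun k => hshift k 1 (by simp)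
  have hb2 : ∀ k : ℤ, |a (k - 2)| ≤ K * lam ^ k.natAbs := fun k => hshift k 2 (by simp)
  have hb3 : ∀ k : ℤ, |a (k - 3)| ≤ K * lam ^ k.natAbs := fun k => hshift k 3 (by simp)
  have hgeom : Summable (fun k : ℤ => (64 * K ^ 2) * (lam ^ 2) ^ k.natAbs) :=
    (summable_geom_int (lam ^ 2) (by positivity) (by nlinarith)).mul_left _
  have hpw : ∀ (x y z w : ℝ) (k : ℤ), |x| ≤ K * lam ^ k.natAbs → |y| ≤ K * lam ^ k.natAbs →
      |z| ≤ K * lam ^ k.natAbs → |w| ≤ K * lam ^ k.natAbs →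
      (x - 3 * y + 3 * z - w) ^ 2 ≤ 64 * K ^ 2 * (lam ^ 2) ^ k.natAbs := by
    intro x y z w k hx hy hz hw
    have h8 : |x - 3 * y + 3 * z - w| ≤ 8 * (K * lam ^ k.natAbs) := by
      calc |x - 3 * y + 3 * z - w| ≤ |x| + 3 * |y| + 3 * |z| + |w| := by
            have := abs_sub (x - 3*y + 3*z) w
            have h1 := abs_add_le (x - 3*y) (3*z)
            have h2 := abs_sub x (3*y)
            rw [abs_mul] at *
            simp only [abs_of_nonneg (by norm_num : (0:ℝ) ≤ 3)] at *
            calc |x - 3 * y + 3 * z - w| ≤ |x - 3*y + 3*z| + |w| := abs_sub _ _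
              _ ≤ |x - 3*y| + 3 * |z| + |w| := by
                  have := abs_add_le (x - 3*y) (3*z)
                  rw [abs_mul, abs_of_nonneg (by norm_num : (0:ℝ) ≤ 3)] at this
                  linarith
              _ ≤ |x| + 3 * |y| + 3 * |z| + |w| := by
                  have := abs_sub x (3*y)
                  rw [abs_mul, abs_of_nonneg (by norm_num : (0:ℝ) ≤ 3)] at this
                  linarith
        _ ≤ 8 * (K * lam ^ k.natAbs) := by linarith
    obtain ⟨hl, hr⟩ := abs_le.mp h8
    have habs2 : (x - 3*y + 3*z - w)^2 ≤ (8 * (K * lam ^ k.natAbs))^2 := sq_le_sq' hl hr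
    calc (x - 3*y + 3*z - w)^2 ≤ (8 * (K * lam ^ k.natAbs))^2 := habs2
      _ = 64 * K ^ 2 * (lam ^ 2) ^ k.natAbs := by rw [← pow_mul, mul_comm 2 k.natAbs, pow_mul]; ring
  -- summability of both series
  have hsumA : Summable (fun k : ℤ => (a k - 3 * a (k - 1) + 3 * a (k - 2) - a (k - 3)) ^ 2) := by
    apply Summable.of_nonneg_of_le (fun k => sq_nonneg _) (fun k => hpw _ _ _ _ k (hba k) (hb1 k) (hb2 k) (hb3 k)) hgeom
  have hsumC : Summable (fun k : ℤ => (a k - 2 * a (k - 1) + a (k - 2)) ^ 2) := by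
    apply Summable.of_nonneg_of_le (fun k => sq_nonneg _) (fun k => ?_) hgeom
    have : (a k - 2 * a (k - 1) + a (k - 2)) ^ 2 =
        (a k - 3 * a (k-1) + 3 * (a (k-1) + a (k-2)) / 3 * 1 - 0)^2 := by ring_nf
    -- easier: reuse hpw with w := a (k-2), y := a(k-1), but coefficients differ; do direct bound
    clear this
    have h4 : |a k - 2 * a (k - 1) + a (k - 2)| ≤ 4 * (K * lam ^ k.natAbs) := by
      have h1 := hba k; have h2 := hb1 k; have h3 := hb2 k
      have := abs_add_le (a k - 2 * a (k-1)) (a (k-2))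
      have h5 := abs_sub (a k) (2 * a (k-1))
      rw [abs_mul, abs_of_nonneg (by norm_num : (0:ℝ) ≤ 2)] at h5
      linarith
    obtain ⟨hl, hr⟩ := abs_le.mp h4
    have : (a k - 2 * a (k - 1) + a (k - 2)) ^ 2 ≤ (4 * (K * lam ^ k.natAbs))^2 := sq_le_sq' hl hr
    calc (a k - 2 * a (k - 1) + a (k - 2)) ^ 2 ≤ (4 * (K * lam ^ k.natAbs))^2 := this
      _ ≤ 64 * K ^ 2 * (lam ^ 2) ^ k.natAbs := by
          rw [← pow_mul, mul_comm 2 k.natAbs, pow_mul]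
          nlinarith [pow_nonneg hlam0.le k.natAbs, sq_nonneg (lam ^ k.natAbs), hKpos.le, sq_nonneg K]
  -- C part: some second difference is nonzero
  have hCne : ∃ k : ℤ, a k - 2 * a (k - 1) + a (k - 2) ≠ 0 := by
    by_contra h
    push_neg at h
    obtain ⟨k, hk⟩ := hne
    exact hk (second_diff_zero a c lam hc hlam0 hlam1 hdecay h k)
  -- A part: some third difference is nonzero
  have hAne : ∃ k : ℤ, a k - 3 * a (k - 1) + 3 * a (k - 2) - a (k - 3) ≠ 0 := by
    by_contra h
    push_neg at h
    -- then second differences are constant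
    set b : ℤ → ℝ := fun k => a k - 2 * a (k - 1) + a (k - 2) with hb
    have hstep : ∀ k : ℤ, b k = b (k - 1) := by
      intro k
      have := h k
      simp only [hb]
      have e1 : (k : ℤ) - 1 - 1 = k - 2 := by ring
      have e2 : (k : ℤ) - 1 - 2 = k - 3 := by ring
      rw [e1, e2]; linarith
    have hconst := int_const_of_step b hstep
    -- b 0 = 0 by decay
    have hb0 : b 0 = 0 := by
      apply abs_le_zero_of_pow (b 0) (4 * c) lam (by linarith) hlam0 hlam1
      intro n
      have := hconst ((n : ℤ) + 2)
      have hval : b 0 = a ((n:ℤ)+2) - 2 * a ((n:ℤ)+1) + a (n:ℤ) := by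
        rw [← this]
        show a ((n:ℤ)+2) - 2 * a ((n:ℤ)+2-1) + a ((n:ℤ)+2-2) = _
        norm_num
        congr 1
        ring
      rw [hval]
      have d0 := hdecay ((n:ℤ)+2)
      have d1 := hdecay ((n:ℤ)+1)
      have d2 := hdecay (n:ℤ)
      have n0 : ((n:ℤ)+2).natAbs = n + 2 := by omega
      have n1 : ((n:ℤ)+1).natAbs = n + 1 := by omega
      have n2 : ((n:ℤ)).natAbs = n := by omega
      rw [n0] at d0; rw [n1] at d1; rw [n2] at d2
      have hp0 : lam ^ (n + 2) ≤ lam ^ n := pow_le_pow_of_le_one hlam0.le hlam1.le (by omega)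
      have hp1 : lam ^ (n + 1) ≤ lam ^ n := pow_le_pow_of_le_one hlam0.le hlam1.le (by omega)
      have htri : |a ((n:ℤ)+2) - 2 * a ((n:ℤ)+1) + a (n:ℤ)| ≤
          |a ((n:ℤ)+2)| + 2 * |a ((n:ℤ)+1)| + |a (n:ℤ)| := by
        have := abs_add_le (a ((n:ℤ)+2) - 2 * a ((n:ℤ)+1)) (a (n:ℤ))
        have h5 := abs_sub (a ((n:ℤ)+2)) (2 * a ((n:ℤ)+1))
        rw [abs_mul, abs_of_nonneg (by norm_num : (0:ℝ) ≤ 2)] at h5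
        linarith
      nlinarith
    -- hence all second differences are zero, reduce to previous case
    have h2 : ∀ k : ℤ, a k - 2 * a (k - 1) + a (k - 2) = 0 := by
      intro k
      have := hconst k
      rw [hb0] at this
      simpa [hb] using this
    obtain ⟨k, hk⟩ := hne
    exact hk (second_diff_zero a c lam hc hlam0 hlam1 hdecay h2 k)
  obtain ⟨kA, hkA⟩ := hAne
  obtain ⟨kC, hkC⟩ := hCne
  constructor
  · exact Summable.tsum_pos hsumA (fun k => sq_nonneg _) kA (by positivity)
  · have := Summable.tsum_pos hsumC (fun k => sq_nonneg _) kC (by positivity)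
    linarith
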